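/- Let A be a bounded invertible operator on ℓ²(ℕ) and b ∈ ℓ²(ℕ), and let P_m be the projection onto the first m canonical basis vectors. For sufficiently large m the operator P_mA*AP_m is invertible on Ran P_m; define y_m = (P_mA*AP_m)⁻¹P_mA*b. Then ‖y_m - A⁻¹b‖ ≤ ‖A⁻¹‖·‖A‖·‖P_m A⁻¹b - A⁻¹b‖, and consequently y_m → A⁻¹b in norm as m → ∞. -/

import Mathlib

open Filter Topology

noncomputable section

/-- `ℓ²(ℕ)` over `ℂ`. -/
abbrev L2 : Type := lp (fun _ : ℕ => ℂ) 2

/-- The canonical orthonormal basis vectors of `ℓ²(ℕ)`. -/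
def eVec (i : ℕ) : L2 := lp.single 2 i 1

/-- `Ran P_m`: the span of the first `m` canonical basis vectors. -/
def spanE (m : ℕ) : Submodule ℂ L2 := Submodule.span ℂ (eVec '' Set.Iio m)

/-- The orthogonal projection `P_m` onto the span of the first `m` basis vectors. -/
def Pproj (m : ℕ) : L2 →L[ℂ] L2 :=
  haveI : FiniteDimensional ℂ (spanE m) :=
    FiniteDimensional.span_of_finite ℂ ((Set.finite_Iio m).image eVec)
  (spanE m).subtypeL.comp (spanE m).orthogonalProjectionOnto

/-!
The normal equations say that the residual `A y_m - b` is orthogonal to `A (Ran P_m)`, so by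
Pythagoras `A y_m` is the best approximation of `b = A x` from `A (Ran P_m)`. Comparing with
`A (P_m x)` gives `‖A (y_m - x)‖ ≤ ‖A‖ ‖P_m x - x‖`, and applying `A⁻¹` gives the bound. The same
orthogonality makes `P_m A* A` injective on the finite-dimensional `Ran P_m`, hence invertible,
and `y_m → x` because `P_m → I` strongly.
-/

open scoped InnerProductSpace InnerProduct

section LeastSquares

variable {𝕜 E F : Type*} [RCLike 𝕜]
  [NormedAddCommGroup E] [InnerProductSpace 𝕜 E] [NormedAddCommGroup F] [InnerProductSpace 𝕜 F]

lemma norm_le_opNorm_mul_norm_apply_of_leftInverse {A : E →L[𝕜] F} {B : F →L[𝕜] E}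
    (hBA : Function.LeftInverse B A) (v : E) : ‖v‖ ≤ ‖B‖ * ‖A v‖ := by
  simpa only [hBA v] using B.le_opNorm (A v)

lemma norm_apply_sub_le_of_forall_inner_eq_zero {K : Submodule 𝕜 E} {A : E →L[𝕜] F} {b : F}
    {y w : E} (hy : y ∈ K) (horth : ∀ z ∈ K, ⟪A y - b, A z⟫_𝕜 = 0) (hw : w ∈ K) :
    ‖A y - b‖ ≤ ‖A w - b‖ := by
  have hsplit : A w - b = (A y - b) + A (w - y) := by rw [map_sub]; abel
  rw [hsplit, mul_self_le_mul_self_iff (norm_nonneg _) (norm_nonneg _),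
    norm_add_sq_eq_norm_sq_add_norm_sq_of_inner_eq_zero _ _ (horth _ (K.sub_mem hw hy))]
  exact le_add_of_nonneg_right (mul_self_nonneg _)

variable [CompleteSpace E] [CompleteSpace F] {K : Submodule 𝕜 E} [K.HasOrthogonalProjection]
  (A : E →L[𝕜] F)

lemma inner_apply_sub_apply_eq_zero_of_starProjection_adjoint_eq {b : F} {y z : E}
    (hyb : K.starProjection ((A†) (A y)) = K.starProjection ((A†) b)) (hz : z ∈ K) :
    ⟪A y - b, A z⟫_𝕜 = 0 := by
  have hres : (A†) (A y - b) ∈ Kᗮ := by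
    rw [← Submodule.starProjection_apply_eq_zero_iff, map_sub, map_sub, hyb, sub_self]
  rw [← ContinuousLinearMap.adjoint_inner_left, inner_eq_zero_symm]
  exact hres z hz

lemma eq_of_starProjection_adjoint_eq {A : E →L[𝕜] F} (hA : Function.Injective A) {b : F}
    {y₁ y₂ : E} (hy₁ : y₁ ∈ K) (hy₂ : y₂ ∈ K)
    (hy₁b : K.starProjection ((A†) (A y₁)) = K.starProjection ((A†) b))
    (hy₂b : K.starProjection ((A†) (A y₂)) = K.starProjection ((A†) b)) : y₁ = y₂ := by
  have hz : y₁ - y₂ ∈ K := K.sub_mem hy₁ hy₂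
  have h : ⟪(A y₁ - b) - (A y₂ - b), A (y₁ - y₂)⟫_𝕜 = 0 := by
    rw [inner_sub_left, inner_apply_sub_apply_eq_zero_of_starProjection_adjoint_eq A hy₁b hz,
      inner_apply_sub_apply_eq_zero_of_starProjection_adjoint_eq A hy₂b hz, sub_zero]
  rw [sub_sub_sub_cancel_right, ← map_sub, inner_self_eq_zero, ← map_zero A] at h
  exact sub_eq_zero.mp (hA h)

/-- `P_K A* A P_K` on `Ran P_K = K`, the operator of the normal equations. -/
noncomputable def compressedNormalOperator : K →L[𝕜] K :=
  K.orthogonalProjectionOnto ∘L (A†) ∘L A ∘L K.subtypeL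

lemma coe_compressedNormalOperator_apply (y : K) :
    (compressedNormalOperator A y : E) = K.starProjection ((A†) (A y)) := rfl

lemma injective_compressedNormalOperator {A : E →L[𝕜] F} (hA : Function.Injective A) :
    Function.Injective (compressedNormalOperator (K := K) A) := fun y₁ y₂ h ↦
  Subtype.ext <| eq_of_starProjection_adjoint_eq hA y₁.2 y₂.2
    (by rw [← coe_compressedNormalOperator_apply, h, coe_compressedNormalOperator_apply]) rfl

lemma existsUnique_mem_starProjection_adjoint_eq [FiniteDimensional 𝕜 K] {A : E →L[𝕜] F}
    (hA : Function.Injective A) (b : F) :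
    ∃! y : E, y ∈ K ∧ K.starProjection ((A†) (A y)) = K.starProjection ((A†) b) := by
  have hsurj : Function.Surjective (compressedNormalOperator (K := K) A) :=
    LinearMap.injective_iff_surjective.mp (injective_compressedNormalOperator hA)
  obtain ⟨y, hy⟩ := hsurj (K.orthogonalProjectionOnto ((A†) b))
  exact ⟨y, ⟨y.2, congrArg Subtype.val hy⟩,
    fun y' ⟨hy', hy'b⟩ ↦ eq_of_starProjection_adjoint_eq hA hy' y.2 hy'b (congrArg Subtype.val hy)⟩

lemma norm_sub_le_of_starProjection_adjoint_eq {A : E →L[𝕜] F} {B : F →L[𝕜] E}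
    (hBA : Function.LeftInverse B A) {x y : E} {b : F} (hx : A x = b) (hy : y ∈ K)
    (hyb : K.starProjection ((A†) (A y)) = K.starProjection ((A†) b)) :
    ‖y - x‖ ≤ ‖B‖ * ‖A‖ * ‖K.starProjection x - x‖ := by
  have hmin : ‖A y - b‖ ≤ ‖A (K.starProjection x) - b‖ :=
    norm_apply_sub_le_of_forall_inner_eq_zero hy
      (fun _ hz ↦ inner_apply_sub_apply_eq_zero_of_starProjection_adjoint_eq A hyb hz)
      (K.starProjection_apply_mem x)
  calc ‖y - x‖ ≤ ‖B‖ * ‖A y - b‖ := by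
        simpa only [map_sub, hx] using norm_le_opNorm_mul_norm_apply_of_leftInverse hBA (y - x)
    _ ≤ ‖B‖ * ‖A (K.starProjection x - x)‖ := by
        rw [map_sub, hx]; gcongr
    _ ≤ ‖B‖ * (‖A‖ * ‖K.starProjection x - x‖) := by gcongr; exact A.le_opNorm _
    _ = ‖B‖ * ‖A‖ * ‖K.starProjection x - x‖ := (mul_assoc _ _ _).symm

end LeastSquares

instance (m : ℕ) : FiniteDimensional ℂ (spanE m) :=
  FiniteDimensional.span_of_finite ℂ ((Set.finite_Iio m).image eVec)

lemma Pproj_eq_starProjection (m : ℕ) : Pproj m = (spanE m).starProjection := rfl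

lemma monotone_spanE : Monotone spanE := fun _ _ hmn ↦
  Submodule.span_mono (Set.image_mono (Set.Iio_subset_Iio hmn))

lemma sum_range_single_mem_spanE (x : L2) (m : ℕ) :
    ∑ i ∈ Finset.range m, lp.single 2 i (x i) ∈ spanE m := by
  refine Submodule.sum_mem _ fun i hi ↦ ?_
  have hsingle : lp.single (E := fun _ : ℕ => ℂ) 2 i (x i) = x i • eVec i := by
    rw [eVec, ← lp.single_smul, smul_eq_mul, mul_one]
  rw [hsingle]
  exact Submodule.smul_mem _ _ (Submodule.subset_span ⟨i, Finset.mem_range.mp hi, rfl⟩)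

lemma top_le_topologicalClosure_iSup_spanE : ⊤ ≤ (⨆ m, spanE m).topologicalClosure := by
  intro x _
  have hsum : Tendsto (fun m ↦ ∑ i ∈ Finset.range m, lp.single 2 i (x i)) atTop (𝓝 x) :=
    (lp.hasSum_single (by norm_num) x).tendsto_sum_nat
  exact mem_closure_of_tendsto hsum (Eventually.of_forall fun m ↦
    Submodule.mem_iSup_of_mem m (sum_range_single_mem_spanE x m))

lemma tendsto_Pproj (x : L2) : Tendsto (fun m ↦ Pproj m x) atTop (𝓝 x) := by
  simpa only [Pproj_eq_starProjection] using
    Submodule.starProjection_tendsto_self spanE monotone_spanE x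
      top_le_topologicalClosure_iSup_spanE

/-- Let `A` be boundedly invertible on `ℓ²(ℕ)` (with inverse `B`) and
`b ∈ ℓ²(ℕ)`.  For sufficiently large `m` the compression `P_m A* A P_m` is invertible on
`Ran P_m`, i.e. the normal equations `P_m A* A y = P_m A* b`, `y ∈ Ran P_m`, have a unique
solution `y_m`; this solution satisfies `‖y_m - A⁻¹b‖ ≤ ‖A⁻¹‖·‖A‖·‖P_m A⁻¹b - A⁻¹b‖`, and
consequently `y_m → A⁻¹b` in norm. -/
theorem stmt_10 (A B : L2 →L[ℂ] L2) (hAB : A * B = 1) (hBA : B * A = 1) (b : L2) :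
    ∃ M : ℕ,
      (∀ m ≥ M, ∃! y : L2, y ∈ spanE m ∧
        Pproj m (ContinuousLinearMap.adjoint A (A y)) =
          Pproj m (ContinuousLinearMap.adjoint A b)) ∧
      (∀ m ≥ M, ∀ y : L2, y ∈ spanE m →
        Pproj m (ContinuousLinearMap.adjoint A (A y)) =
          Pproj m (ContinuousLinearMap.adjoint A b) →
        ‖y - B b‖ ≤ ‖B‖ * ‖A‖ * ‖Pproj m (B b) - B b‖) ∧
      (∀ ym : ℕ → L2,
        (∀ m ≥ M, ym m ∈ spanE m ∧
          Pproj m (ContinuousLinearMap.adjoint A (A (ym m))) =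
            Pproj m (ContinuousLinearMap.adjoint A b)) →
        Tendsto ym atTop (𝓝 (B b))) := by
  have hleft : Function.LeftInverse B A := fun v ↦ by simpa using congr($hBA v)
  have hABb : A (B b) = b := by simpa using congr($hAB b)
  have hbound : ∀ m, ∀ y ∈ spanE m,
      Pproj m ((A†) (A y)) = Pproj m ((A†) b) → ‖y - B b‖ ≤ ‖B‖ * ‖A‖ * ‖Pproj m (B b) - B b‖ :=
    fun m _ hy hyb ↦ by
      rw [Pproj_eq_starProjection] at hyb ⊢
      exact norm_sub_le_of_starProjection_adjoint_eq hleft hABb hy hyb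
  refine ⟨0, fun m _ ↦ by
      simpa only [Pproj_eq_starProjection] using
        existsUnique_mem_starProjection_adjoint_eq hleft.injective b,
    fun m _ ↦ hbound m, fun ym hym ↦ ?_⟩
  have hP : Tendsto (fun m ↦ ‖B‖ * ‖A‖ * ‖Pproj m (B b) - B b‖) atTop (𝓝 0) := by
    simpa using ((tendsto_Pproj (B b)).sub_const (B b)).norm.const_mul (‖B‖ * ‖A‖)
  rw [tendsto_iff_norm_sub_tendsto_zero]
  exact squeeze_zero (fun _ ↦ norm_nonneg _)
    (fun m ↦ hbound m _ (hym m m.zero_le).1 (hym m m.zero_le).2) hP
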